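/- Let n ≥ 1 and 0 ≤ k ≤ n−1 be integers, α, β ∈ ℝ, and x₁, x₂, … ∈ ℝ. Then Σ_{j=1}^{n−k} (α·j + β)·C(n,j)·x_j·B_{n−j,k}(x₁,…,x_{n−j−k+1}) = (α·n + β·(k+1))·B_{n,k+1}(x₁,…,x_{n−k}), where C(n,j) denotes the binomial coefficient. -/

import Mathlib

/-- The partial Bell polynomial `B_{n,k}(x₁,…,x_{n−k+1})`, defined by the explicit sum
`Σ n!/(j₁!⋯j_{n−k+1}!)·∏ᵢ(xᵢ/i!)^{jᵢ}` over nonnegative integers `j₁,…,j_{n−k+1}` with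
`j₁+⋯+j_{n−k+1} = k` and `1j₁+2j₂+⋯+(n−k+1)j_{n−k+1} = n`. -/
noncomputable def bellPoly (n k : ℕ) (x : ℕ → ℝ) : ℝ :=
  ∑ j ∈ (Finset.Nat.antidiagonalTuple (n - k + 1) k).filter
      (fun j : Fin (n - k + 1) → ℕ => ∑ i : Fin (n - k + 1), ((i : ℕ) + 1) * j i = n),
    (n.factorial : ℝ) / (∏ i : Fin (n - k + 1), ((j i).factorial : ℝ)) *
      ∏ i : Fin (n - k + 1), (x ((i : ℕ) + 1) / (((i : ℕ) + 1).factorial : ℝ)) ^ (j i)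

/-!
Write `B_{n,k+1}` as a sum of terms `T_n(j) = n!/∏ jᵢ! · ∏ (x_{i+1}/(i+1)!)^{jᵢ}` over the
multiplicity tuples `j` (`jᵢ` parts of size `i + 1`) of length `n - k`; padding tuples by zeros
changes no Bell sum, so `B_{n-m,k}` may be summed over the same length. Removing one part of size
`m = i + 1` is a bijection from the tuples with `jᵢ ≠ 0` onto those of `B_{n-m,k}`, and since
`n! = C(n,m) · m! · (n-m)!` and `jᵢ! = jᵢ · (jᵢ - 1)!` it gives
`Σ_j jᵢ · T_n(j) = C(n,m) · x_m · B_{n-m,k}`. Hence the left side is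
`Σ_j (Σ_i (α(i+1) + β) jᵢ) T_n(j)`, and the inner sum is `αn + β(k+1)` for every `j`.
-/

open Finset

theorem sum_Icc_one_eq_sum_fin {M : Type*} [AddCommMonoid M] (m : ℕ) (f : ℕ → M) :
    ∑ j ∈ Icc 1 m, f j = ∑ i : Fin m, f (i + 1) := by
  rw [Fin.sum_univ_eq_sum_range (fun i => f (i + 1)), ← Ico_add_one_right_eq_Icc,
    sum_Ico_eq_sum_range]
  simp only [add_tsub_cancel_right, add_comm]

@[to_additive]
theorem prod_apply_update {ι α M : Type*} [Fintype ι] [DecidableEq ι] [CommMonoid M]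
    (F : ι → α → M) (g : ι → α) (i : ι) (b : α) :
    ∏ l, F l (Function.update g i b l) = F i b * ∏ l ∈ univ \ {i}, F l (g l) := by
  simp_rw [Function.apply_update F]
  exact prod_update_of_mem (mem_univ i) _ _

def bellIndex (L n k : ℕ) : Finset (Fin L → ℕ) :=
  (Nat.antidiagonalTuple L k).filter fun j => ∑ i : Fin L, ((i : ℕ) + 1) * j i = n

noncomputable def bellTerm (n : ℕ) (x : ℕ → ℝ) {L : ℕ} (j : Fin L → ℕ) : ℝ :=
  (n.factorial : ℝ) / (∏ i : Fin L, ((j i).factorial : ℝ)) *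
    ∏ i : Fin L, (x ((i : ℕ) + 1) / (((i : ℕ) + 1).factorial : ℝ)) ^ (j i)

noncomputable def bellSum (L n k : ℕ) (x : ℕ → ℝ) : ℝ :=
  ∑ j ∈ bellIndex L n k, bellTerm n x j

theorem mem_bellIndex {L n k : ℕ} {j : Fin L → ℕ} :
    j ∈ bellIndex L n k ↔ ∑ i, j i = k ∧ ∑ i : Fin L, ((i : ℕ) + 1) * j i = n := by
  simp [bellIndex, Nat.mem_antidiagonalTuple]

theorem bellPoly_eq_bellSum (n k : ℕ) (x : ℕ → ℝ) : bellPoly n k x = bellSum (n - k + 1) n k x :=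
  rfl

theorem bellIndex_apply_eq_zero {L n k : ℕ} {j : Fin L → ℕ} (hj : j ∈ bellIndex L n k)
    {i : Fin L} (hi : n < k + i) : j i = 0 := by
  obtain ⟨hsum, hweight⟩ := mem_bellIndex.1 hj
  by_contra hne
  have hsplit : ∑ l : Fin L, ((l : ℕ) + 1) * j l = ∑ l : Fin L, (l : ℕ) * j l + ∑ l, j l := by
    rw [← sum_add_distrib]
    exact sum_congr rfl fun l _ => by ring
  have hi_le : (i : ℕ) ≤ ∑ l : Fin L, (l : ℕ) * j l :=
    (Nat.le_mul_of_pos_right _ (Nat.pos_of_ne_zero hne)).trans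
      (single_le_sum (f := fun l : Fin L => (l : ℕ) * j l) (fun _ _ => Nat.zero_le _) (mem_univ i))
  omega

theorem bellSum_succ {L n k : ℕ} (hL : n < k + L) (x : ℕ → ℝ) :
    bellSum (L + 1) n k x = bellSum L n k x := by
  have hlast : ∀ j ∈ bellIndex (L + 1) n k, j (Fin.last L) = 0 := fun j hj =>
    bellIndex_apply_eq_zero hj (by simpa using hL)
  refine sum_nbij' Fin.init (fun j => Fin.snoc j 0) ?_ ?_ ?_ ?_ ?_
  · intro j hj
    have h0 := hlast j hj
    rw [mem_bellIndex, Fin.sum_univ_castSucc, Fin.sum_univ_castSucc] at hj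
    simpa [mem_bellIndex, h0, Fin.init] using hj
  · intro j hj
    rw [mem_bellIndex] at hj
    simpa [mem_bellIndex, Fin.sum_univ_castSucc] using hj
  · intro j hj
    rw [← hlast j hj, Fin.snoc_init_self]
  · intro j _
    exact Fin.init_snoc _ _
  · intro j hj
    simp [bellTerm, Fin.prod_univ_castSucc, hlast j hj, Fin.init]

theorem bellSum_eq_bellPoly {L n k : ℕ} (hL : n - k + 1 ≤ L) (x : ℕ → ℝ) :
    bellSum L n k x = bellPoly n k x := by
  rw [bellPoly_eq_bellSum]
  induction L, hL using Nat.le_induction with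
  | base => rfl
  | succ L hL ih => rw [bellSum_succ (by omega), ih]

theorem bellTerm_update_succ {L n : ℕ} (x : ℕ → ℝ) (j : Fin L → ℕ) (i : Fin L)
    (hi : (i : ℕ) + 1 ≤ n) :
    ((j i : ℝ) + 1) * bellTerm n x (Function.update j i (j i + 1))
      = n.choose (i + 1) * x (i + 1) * bellTerm (n - (i + 1)) x j := by
  unfold bellTerm
  simp only [prod_apply_update (fun _ (c : ℕ) => (c.factorial : ℝ)),
    prod_apply_update (fun (l : Fin L) c => (x ((l : ℕ) + 1) / (((l : ℕ) + 1).factorial : ℝ)) ^ c)]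
  rw [prod_eq_mul_prod_sdiff_singleton_of_mem (mem_univ i) (fun l => ((j l).factorial : ℝ)),
    prod_eq_mul_prod_sdiff_singleton_of_mem (mem_univ i)
      (fun l => (x ((l : ℕ) + 1) / (((l : ℕ) + 1).factorial : ℝ)) ^ (j l)),
    ← Nat.choose_mul_factorial_mul_factorial hi]
  push_cast [Nat.factorial_succ, pow_succ]
  field_simp

theorem sum_apply_mul_bellTerm {L n : ℕ} (k : ℕ) (x : ℕ → ℝ) (i : Fin L)
    (hi : (i : ℕ) + 1 ≤ n) :
    ∑ j ∈ bellIndex L n (k + 1), (j i : ℝ) * bellTerm n x j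
      = n.choose (i + 1) * x (i + 1) * bellSum L (n - (i + 1)) k x := by
  rw [bellSum, mul_sum,
    ← sum_filter_of_ne (p := fun j => j i ≠ 0) (fun _ _ hne h0 => hne (by simp [h0]))]
  symm
  refine sum_nbij' (fun j => Function.update j i (j i + 1))
    (fun j => Function.update j i (j i - 1)) ?_ ?_ ?_ ?_ ?_
  · intro j hj
    rw [mem_bellIndex, sum_eq_add_sum_sdiff_singleton_of_mem (mem_univ i),
      sum_eq_add_sum_sdiff_singleton_of_mem (mem_univ i)] at hj
    simp only [mem_filter, mem_bellIndex, sum_apply_update (fun _ c => c),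
      sum_apply_update (fun (l : Fin L) c => ((l : ℕ) + 1) * c), Function.update_self, mul_add_one]
    omega
  · intro j hj
    simp only [mem_filter] at hj
    obtain ⟨hj, hne⟩ := hj
    rw [mem_bellIndex, sum_eq_add_sum_sdiff_singleton_of_mem (mem_univ i),
      sum_eq_add_sum_sdiff_singleton_of_mem (mem_univ i)] at hj
    simp only [mem_bellIndex, sum_apply_update (fun _ c => c),
      sum_apply_update (fun (l : Fin L) c => ((l : ℕ) + 1) * c), Nat.mul_sub_one]
    have := Nat.le_mul_of_pos_right ((i : ℕ) + 1) (Nat.pos_of_ne_zero hne)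
    omega
  · intro j _
    simp
  · intro j hj
    simp only [mem_filter] at hj
    simp [Nat.sub_add_cancel (Nat.pos_of_ne_zero hj.2)]
  · intro j _
    rw [Function.update_self]
    push_cast
    exact (bellTerm_update_succ x j i hi).symm

theorem sum_affine_mul_of_mem_bellIndex {L n k : ℕ} {j : Fin L → ℕ} (hj : j ∈ bellIndex L n k)
    (α β : ℝ) :
    ∑ i : Fin L, (α * ((i : ℕ) + 1) + β) * (j i : ℝ) = α * n + β * k := by
  obtain ⟨hsum, hweight⟩ := mem_bellIndex.1 hj
  simp_rw [add_mul, sum_add_distrib, mul_assoc, ← mul_sum]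
  rw [← hsum, ← hweight]
  push_cast
  rfl

theorem stmt_11 (n k : ℕ) (hn : 1 ≤ n) (hk : k ≤ n - 1) (α β : ℝ) (x : ℕ → ℝ) :
    ∑ j ∈ Finset.Icc 1 (n - k),
      (α * j + β) * (n.choose j : ℝ) * x j * bellPoly (n - j) k x
    = (α * n + β * (k + 1)) * bellPoly n (k + 1) x := by
  calc ∑ j ∈ Icc 1 (n - k), (α * j + β) * (n.choose j : ℝ) * x j * bellPoly (n - j) k x
      = ∑ i : Fin (n - k), (α * ((i : ℕ) + 1) + β) *
          ∑ j ∈ bellIndex (n - k) n (k + 1), (j i : ℝ) * bellTerm n x j := by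
        rw [sum_Icc_one_eq_sum_fin]
        refine sum_congr rfl fun i _ => ?_
        rw [sum_apply_mul_bellTerm k x i (by omega), bellSum_eq_bellPoly (by omega)]
        push_cast
        ring
    _ = ∑ j ∈ bellIndex (n - k) n (k + 1),
          (∑ i : Fin (n - k), (α * ((i : ℕ) + 1) + β) * (j i : ℝ)) * bellTerm n x j := by
        simp_rw [mul_sum, sum_mul, mul_assoc]
        exact sum_comm
    _ = (α * n + β * (k + 1)) * bellPoly n (k + 1) x := by
        rw [← bellSum_eq_bellPoly (L := n - k) (by omega), bellSum, mul_sum]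
        refine sum_congr rfl fun j hj => ?_
        rw [sum_affine_mul_of_mem_bellIndex hj]
        push_cast
        rfl
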